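/- Let F_v be the extremal storage function F_{v,γ,p}(x) = sup over finite paths π starting at v and inputs w of Σ_t ‖z_t(x,w)‖_p^p − γ^p Σ_t ‖w_t‖_p^p. Then for every edge (u,v,σ) of Θ, every x ∈ ℝⁿ, and every w ∈ ℝᵈ: F_v(A_σ x + B_σ w) + ‖C_σ x + D_σ w‖_p^p ≤ F_u(x) + γ^p ‖w‖_p^p (an inequality in the extended reals). -/

import Mathlib

/-- The state of the switching system along the mode sequence `σseq`, driven by
inputs `w` from initial state `x0`. -/
def stSeq {Λ : Type*} {n d : ℕ} (A : Λ → Matrix (Fin n) (Fin n) ℝ)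
    (B : Λ → Matrix (Fin n) (Fin d) ℝ)
    (σseq : ℕ → Λ) (w : ℕ → Fin d → ℝ) (x0 : Fin n → ℝ) : ℕ → Fin n → ℝ
  | 0 => x0
  | t + 1 => (A (σseq t)).mulVec (stSeq A B σseq w x0 t) + (B (σseq t)).mulVec (w t)

/-- The extremal storage function `F_{v,γ,p}`: the supremum, over all finite
admissible paths starting at node `v` and all input sequences, of the output
`p`-cost minus `γ^p` times the input `p`-cost, as an extended real. -/
noncomputable def Fv {V Λ : Type*} {n d m : ℕ} (E : Set (V × V × Λ))
    (A : Λ → Matrix (Fin n) (Fin n) ℝ) (B : Λ → Matrix (Fin n) (Fin d) ℝ)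
    (C : Λ → Matrix (Fin m) (Fin n) ℝ) (D : Λ → Matrix (Fin m) (Fin d) ℝ)
    (p γ : ℝ) (v : V) (x : Fin n → ℝ) : EReal :=
  ⨆ (T : ℕ) (vseq : ℕ → V) (σseq : ℕ → Λ) (w : ℕ → Fin d → ℝ)
    (_ : vseq 0 = v) (_ : ∀ t < T, (vseq t, vseq (t + 1), σseq t) ∈ E),
    (((∑ t ∈ Finset.range T, ∑ i,
        |((C (σseq t)).mulVec (stSeq A B σseq w x t) + (D (σseq t)).mulVec (w t)) i| ^ p)
      - γ ^ p * ∑ t ∈ Finset.range T, ∑ i, |w t i| ^ p : ℝ) : EReal)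

lemma stSeq_shift {Λ : Type*} {n d : ℕ} (A : Λ → Matrix (Fin n) (Fin n) ℝ)
    (B : Λ → Matrix (Fin n) (Fin d) ℝ) (σ : Λ) (σseq : ℕ → Λ)
    (w0 : Fin d → ℝ) (w : ℕ → Fin d → ℝ) (x : Fin n → ℝ) (t : ℕ) :
    stSeq A B (fun t => Nat.casesOn t σ σseq) (fun t => Nat.casesOn t w0 w) x (t + 1)
      = stSeq A B σseq w ((A σ).mulVec x + (B σ).mulVec w0) t := by
  induction t with
  | zero => simp [stSeq]
  | succ s ih =>
      show (A (σseq s)).mulVec (stSeq A B (fun t => Nat.casesOn t σ σseq)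
            (fun t => Nat.casesOn t w0 w) x (s + 1)) + (B (σseq s)).mulVec (w s)
          = (A (σseq s)).mulVec (stSeq A B σseq w
            ((A σ).mulVec x + (B σ).mulVec w0) s) + (B (σseq s)).mulVec (w s)
      rw [ih]

/-- the Bellman (dissipation) inequality for the extremal storage
functions, in the extended reals. -/
theorem stmt7 {V Λ : Type*} {n d m : ℕ} (E : Set (V × V × Λ))
    (A : Λ → Matrix (Fin n) (Fin n) ℝ) (B : Λ → Matrix (Fin n) (Fin d) ℝ)
    (C : Λ → Matrix (Fin m) (Fin n) ℝ) (D : Λ → Matrix (Fin m) (Fin d) ℝ)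
    (p : ℝ) (hp : 1 ≤ p) (γ : ℝ) (hγ : 0 < γ) :
    ∀ (u v : V) (σ : Λ), (u, v, σ) ∈ E → ∀ (x : Fin n → ℝ) (w : Fin d → ℝ),
      Fv E A B C D p γ v ((A σ).mulVec x + (B σ).mulVec w)
          + ((∑ i, |((C σ).mulVec x + (D σ).mulVec w) i| ^ p : ℝ) : EReal)
        ≤ Fv E A B C D p γ u x + ((γ ^ p * ∑ i, |w i| ^ p : ℝ) : EReal) := by
  intro u v σ hE x w
  set c : ℝ := ∑ i, |((C σ).mulVec x + (D σ).mulVec w) i| ^ p with hc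
  set k : ℝ := γ ^ p * ∑ i, |w i| ^ p with hk
  have key : Fv E A B C D p γ v ((A σ).mulVec x + (B σ).mulVec w)
      ≤ Fv E A B C D p γ u x + ((k - c : ℝ) : EReal) := by
    rw [Fv]
    refine iSup_le fun T => iSup_le fun vseq => iSup_le fun σseq => iSup_le fun wseq =>
      iSup_le fun h0 => iSup_le fun hpath => ?_
    -- extended sequences
    set vseq' : ℕ → V := fun t => Nat.casesOn t u vseq with hv'
    set σseq' : ℕ → Λ := fun t => Nat.casesOn t σ σseq with hσ'
    set wseq' : ℕ → Fin d → ℝ := fun t => Nat.casesOn t w wseq with hw'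
    have h0' : vseq' 0 = u := rfl
    have hpath' : ∀ t < T + 1, (vseq' t, vseq' (t + 1), σseq' t) ∈ E := by
      intro t ht
      cases t with
      | zero => simpa [vseq', σseq', h0] using hE
      | succ s => exact hpath s (by omega)
    have hterm : (((∑ t ∈ Finset.range (T+1), ∑ i,
          |((C (σseq' t)).mulVec (stSeq A B σseq' wseq' x t)
            + (D (σseq' t)).mulVec (wseq' t)) i| ^ p)
        - γ ^ p * ∑ t ∈ Finset.range (T+1), ∑ i, |wseq' t i| ^ p : ℝ) : EReal)
        ≤ Fv E A B C D p γ u x := by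
      rw [Fv]
      exact le_iSup_of_le (T+1) (le_iSup_of_le vseq' (le_iSup_of_le σseq'
        (le_iSup_of_le wseq' (le_iSup_of_le h0' (le_iSup_of_le hpath' le_rfl)))))
    -- relate the sums
    have hsum1 : (∑ t ∈ Finset.range (T+1), ∑ i,
          |((C (σseq' t)).mulVec (stSeq A B σseq' wseq' x t)
            + (D (σseq' t)).mulVec (wseq' t)) i| ^ p)
        = (∑ t ∈ Finset.range T, ∑ i,
          |((C (σseq t)).mulVec (stSeq A B σseq wseq
              ((A σ).mulVec x + (B σ).mulVec w) t)
            + (D (σseq t)).mulVec (wseq t)) i| ^ p) + c := by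
      rw [Finset.sum_range_succ']
      have e1 : ∀ t : ℕ, (∑ i, |((C (σseq' (t+1))).mulVec (stSeq A B σseq' wseq' x (t+1))
            + (D (σseq' (t+1))).mulVec (wseq' (t+1))) i| ^ p)
          = ∑ i, |((C (σseq t)).mulVec (stSeq A B σseq wseq
              ((A σ).mulVec x + (B σ).mulVec w) t)
            + (D (σseq t)).mulVec (wseq t)) i| ^ p := by
        intro t
        rw [show σseq' (t+1) = σseq t from rfl, show wseq' (t+1) = wseq t from rfl,
          hσ', hw', stSeq_shift]
      rw [Finset.sum_congr rfl fun t _ => e1 t]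
      congr 1
    have hsum2 : (∑ t ∈ Finset.range (T+1), ∑ i, |wseq' t i| ^ p)
        = (∑ t ∈ Finset.range T, ∑ i, |wseq t i| ^ p) + ∑ i, |w i| ^ p := by
      rw [Finset.sum_range_succ']
      simp [wseq']
    have hreal : ((∑ t ∈ Finset.range T, ∑ i,
          |((C (σseq t)).mulVec (stSeq A B σseq wseq
              ((A σ).mulVec x + (B σ).mulVec w) t)
            + (D (σseq t)).mulVec (wseq t)) i| ^ p)
        - γ ^ p * ∑ t ∈ Finset.range T, ∑ i, |wseq t i| ^ p : ℝ)
        = ((∑ t ∈ Finset.range (T+1), ∑ i,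
          |((C (σseq' t)).mulVec (stSeq A B σseq' wseq' x t)
            + (D (σseq' t)).mulVec (wseq' t)) i| ^ p)
        - γ ^ p * ∑ t ∈ Finset.range (T+1), ∑ i, |wseq' t i| ^ p : ℝ) + (k - c) := by
      rw [hsum1, hsum2, hk]; ring
    calc (((∑ t ∈ Finset.range T, ∑ i,
          |((C (σseq t)).mulVec (stSeq A B σseq wseq
              ((A σ).mulVec x + (B σ).mulVec w) t)
            + (D (σseq t)).mulVec (wseq t)) i| ^ p)
        - γ ^ p * ∑ t ∈ Finset.range T, ∑ i, |wseq t i| ^ p : ℝ) : EReal)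
        = (((∑ t ∈ Finset.range (T+1), ∑ i,
          |((C (σseq' t)).mulVec (stSeq A B σseq' wseq' x t)
            + (D (σseq' t)).mulVec (wseq' t)) i| ^ p)
        - γ ^ p * ∑ t ∈ Finset.range (T+1), ∑ i, |wseq' t i| ^ p : ℝ) : EReal)
          + ((k - c : ℝ) : EReal) := by
          rw [← EReal.coe_add, ← hreal]
      _ ≤ Fv E A B C D p γ u x + ((k - c : ℝ) : EReal) :=
          add_le_add_left hterm _
  calc Fv E A B C D p γ v ((A σ).mulVec x + (B σ).mulVec w) + ((c : ℝ) : EReal)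
      ≤ (Fv E A B C D p γ u x + ((k - c : ℝ) : EReal)) + ((c : ℝ) : EReal) :=
        add_le_add_left key _
    _ = Fv E A B C D p γ u x + ((k : ℝ) : EReal) := by
        rw [add_assoc, ← EReal.coe_add]; norm_num
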